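/- Let δ > 0, γ > 1/δ, 0 ≤ γ' < 1/δ, and μ > 0 with (1+μ)(γ + γ') < 1. For n > 1 set I_μ(n) = ∫_{n^{−1−μ}}^1 ∫_{n^{−1−μ}}^1 min(1, (min(s,t))^{−γδ} (max(s,t))^{−γ'δ} n^{−δ}) ds dt. Then lim_{n→∞} (−log I_μ(n) / log n) = δ − (1+μ)(γδ − 1). -/

import Mathlib

open Filter

/-!
Put `a = n^(-1-μ)`, `p = γδ > 1`, `q = γ'δ < 1` and `K = n^(-δ)`. The integrand is at most
`K (s^(-p) t^(-q) + s^(-q) t^(-p))`, whose integral over `[a,1]²` is `O(K a^(1-p))` because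
`p > 1 > q`. On `[a,2a] × [1/2,1]` it is at least `(2a)^(-p) K` (the cap `1` is inactive since
`(1+μ)γ < 1`), which gives the matching lower bound `≍ K a^(1-p)`. Hence the integral is
`n^(-(δ - (1+μ)(γδ-1)))` up to constant factors, and the logarithms of the constants vanish
after division by `log n`.
-/

open MeasureTheory Set Topology

theorem tendsto_neg_log_div_log_of_bounds {f : ℝ → ℝ} {c C ψ : ℝ} (hc : 0 < c) (hC : 0 < C)
    (hlow : ∀ᶠ n in atTop, c * n ^ (-ψ) ≤ f n) (hup : ∀ᶠ n in atTop, f n ≤ C * n ^ (-ψ)) :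
    Tendsto (fun n => -Real.log (f n) / Real.log n) atTop (𝓝 ψ) := by
  have hlog : ∀ {K n : ℝ}, 0 < K → 1 < n →
      -Real.log (K * n ^ (-ψ)) / Real.log n = ψ - Real.log K / Real.log n := by
    intro K n hK hn
    have hn0 : Real.log n ≠ 0 := (Real.log_pos hn).ne'
    rw [Real.log_mul hK.ne' (Real.rpow_pos_of_pos (by linarith) _).ne', Real.log_rpow (by linarith)]
    field_simp
    ring
  have hlim : ∀ K : ℝ, Tendsto (fun n => ψ - Real.log K / Real.log n) atTop (𝓝 ψ) := fun K => by
    simpa using tendsto_const_nhds.sub (tendsto_const_nhds.div_atTop Real.tendsto_log_atTop)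
  refine tendsto_of_tendsto_of_tendsto_of_le_of_le' (hlim C) (hlim c) ?_ ?_
  · filter_upwards [hlow, hup, eventually_gt_atTop 1] with n hl hu hn
    have hfn : 0 < f n := (mul_pos hc (Real.rpow_pos_of_pos (by linarith) _)).trans_le hl
    rw [← hlog hC hn]
    exact div_le_div_of_nonneg_right (neg_le_neg (Real.log_le_log hfn hu)) (Real.log_nonneg hn.le)
  · filter_upwards [hlow, eventually_gt_atTop 1] with n hl hn
    have hlow_pos : 0 < c * n ^ (-ψ) := mul_pos hc (Real.rpow_pos_of_pos (by linarith) _)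
    rw [← hlog hc hn]
    exact div_le_div_of_nonneg_right (neg_le_neg (Real.log_le_log hlow_pos hl))
      (Real.log_nonneg hn.le)

theorem integral_Icc_rpow_neg {a p : ℝ} (ha : 0 < a) (ha1 : a ≤ 1) (hp : p ≠ 1) :
    ∫ s in Icc a 1, s ^ (-p) = (1 - a ^ (1 - p)) / (1 - p) := by
  rw [integral_Icc_eq_integral_Ioc, ← intervalIntegral.integral_of_le ha1,
    integral_rpow (Or.inr ⟨by contrapose! hp; linarith, by simp [uIcc_of_le ha1, ha.not_ge]⟩),
    Real.one_rpow, neg_add_eq_sub]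

theorem integral_Icc_rpow_neg_le_of_one_lt {a p : ℝ} (ha : 0 < a) (ha1 : a ≤ 1) (hp : 1 < p) :
    ∫ s in Icc a 1, s ^ (-p) ≤ a ^ (1 - p) / (p - 1) := by
  rw [integral_Icc_rpow_neg ha ha1 hp.ne', ← neg_div_neg_eq, neg_sub, neg_sub]
  gcongr
  linarith

theorem integral_Icc_rpow_neg_le_of_lt_one {a q : ℝ} (ha : 0 < a) (ha1 : a ≤ 1) (hq : q < 1) :
    ∫ t in Icc a 1, t ^ (-q) ≤ 1 / (1 - q) := by
  rw [integral_Icc_rpow_neg ha ha1 hq.ne]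
  exact div_le_div_of_nonneg_right (by linarith [Real.rpow_nonneg ha.le (1 - q)]) (by linarith)

theorem integrableOn_Icc_rpow {a : ℝ} (ha : 0 < a) (r : ℝ) :
    IntegrableOn (fun t : ℝ => t ^ r) (Icc a 1) :=
  ContinuousOn.integrableOn_Icc fun x hx =>
    (Real.continuousAt_rpow_const x r (Or.inl (ha.trans_le hx.1).ne')).continuousWithinAt

/-- The connection probability `φ(s,t,n)` of the paper, with `p = γδ`, `q = γ'δ`, `K = n^(-δ)`. -/
noncomputable def connectionProb (p q K s t : ℝ) : ℝ :=
  min 1 (min s t ^ (-p) * max s t ^ (-q) * K)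

section connectionProb

variable {p q K s t : ℝ}

theorem connectionProb_le_one : connectionProb p q K s t ≤ 1 := min_le_left _ _

theorem connectionProb_nonneg (hK : 0 ≤ K) (hs : 0 ≤ s) (ht : 0 ≤ t) :
    0 ≤ connectionProb p q K s t := by
  have hmin : 0 ≤ min s t := le_min hs ht
  have hmax : 0 ≤ max s t := hmin.trans min_le_max
  unfold connectionProb
  positivity

theorem connectionProb_le (hK : 0 ≤ K) (hs : 0 ≤ s) (ht : 0 ≤ t) :
    connectionProb p q K s t ≤ K * (s ^ (-p) * t ^ (-q) + s ^ (-q) * t ^ (-p)) := by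
  refine (min_le_right _ _).trans ?_
  rcases le_total s t with hst | hts
  · rw [min_eq_left hst, max_eq_right hst]
    nlinarith [mul_nonneg hK (mul_nonneg (Real.rpow_nonneg hs (-q)) (Real.rpow_nonneg ht (-p)))]
  · rw [min_eq_right hts, max_eq_left hts]
    nlinarith [mul_nonneg hK (mul_nonneg (Real.rpow_nonneg hs (-p)) (Real.rpow_nonneg ht (-q)))]

theorem le_connectionProb {b : ℝ} (hs : 0 < s) (hsb : s ≤ b) (hst : s ≤ t) (ht1 : t ≤ 1)
    (hp : 0 ≤ p) (hq : 0 ≤ q) (hK : 0 ≤ K) (hbK : b ^ (-p) * K ≤ 1) :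
    b ^ (-p) * K ≤ connectionProb p q K s t := by
  refine le_min hbK ?_
  rw [min_eq_left hst, max_eq_right hst]
  have hb : b ^ (-p) ≤ s ^ (-p) := Real.rpow_le_rpow_of_nonpos hs hsb (neg_nonpos.2 hp)
  have ht : 1 ≤ t ^ (-q) := Real.one_le_rpow_of_pos_of_le_one_of_nonpos (hs.trans_le hst) ht1
    (neg_nonpos.2 hq)
  calc b ^ (-p) * K = b ^ (-p) * 1 * K := by rw [mul_one]
    _ ≤ s ^ (-p) * t ^ (-q) * K := by gcongr

theorem measurable_connectionProb :
    Measurable fun z : ℝ × ℝ => connectionProb p q K z.1 z.2 := by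
  unfold connectionProb
  fun_prop

theorem integrableOn_connectionProb {S : Set (ℝ × ℝ)} (hS : S ⊆ Ici 0 ×ˢ Ici 0)
    (hSfin : volume S ≠ ⊤) (hK : 0 ≤ K) :
    IntegrableOn (fun z : ℝ × ℝ => connectionProb p q K z.1 z.2) S := by
  refine Measure.integrableOn_of_bounded (M := 1) hSfin
    measurable_connectionProb.aestronglyMeasurable
    (ae_restrict_of_ae_restrict_of_subset hS
      (ae_restrict_of_forall_mem (measurableSet_Ici.prod measurableSet_Ici) fun z hz => ?_))
  rw [Real.norm_of_nonneg (connectionProb_nonneg hK hz.1 hz.2)]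
  exact connectionProb_le_one

theorem integral_connectionProb_eq_setIntegral_prod {a : ℝ} (ha : 0 ≤ a) (hK : 0 ≤ K) :
    ∫ s in Icc a 1, ∫ t in Icc a 1, connectionProb p q K s t
      = ∫ z in Icc a 1 ×ˢ Icc a 1, connectionProb p q K z.1 z.2 := by
  rw [Measure.volume_eq_prod, setIntegral_prod]
  exact integrableOn_connectionProb
    (prod_mono (fun x hx => ha.trans hx.1) (fun x hx => ha.trans hx.1))
    (isCompact_Icc.prod isCompact_Icc).measure_lt_top.ne hK

theorem integral_connectionProb_le {a : ℝ} (ha : 0 < a) (ha1 : a ≤ 1) (hp : 1 < p) (hq : q < 1)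
    (hK : 0 ≤ K) :
    ∫ s in Icc a 1, ∫ t in Icc a 1, connectionProb p q K s t
      ≤ 2 / ((p - 1) * (1 - q)) * (a ^ (1 - p) * K) := by
  set S := Icc a 1
  have hS : S ×ˢ S ⊆ Ici 0 ×ˢ Ici 0 :=
    prod_mono (fun x hx => ha.le.trans hx.1) (fun x hx => ha.le.trans hx.1)
  have hprod : ∀ r r' : ℝ, ∫ z in S ×ˢ S, z.1 ^ (-r) * z.2 ^ (-r')
      = (∫ s in S, s ^ (-r)) * ∫ t in S, t ^ (-r') := fun r r' => by
    rw [Measure.volume_eq_prod, ← Measure.prod_restrict]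
    exact integral_prod_mul (fun s => s ^ (-r)) (fun t => t ^ (-r'))
  have hint : ∀ r r' : ℝ, IntegrableOn (fun z : ℝ × ℝ => z.1 ^ (-r) * z.2 ^ (-r')) (S ×ˢ S) :=
    fun r r' => by
      rw [IntegrableOn, Measure.volume_eq_prod, ← Measure.prod_restrict]
      exact (integrableOn_Icc_rpow ha _).mul_prod (integrableOn_Icc_rpow ha _)
  have hSq0 : 0 ≤ ∫ t in S, t ^ (-q) :=
    setIntegral_nonneg measurableSet_Icc fun t ht => Real.rpow_nonneg (ha.le.trans ht.1) _
  have hp0 : 0 ≤ a ^ (1 - p) / (p - 1) := div_nonneg (Real.rpow_nonneg ha.le _) (by linarith)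
  rw [integral_connectionProb_eq_setIntegral_prod ha.le hK]
  calc ∫ z in S ×ˢ S, connectionProb p q K z.1 z.2
      ≤ ∫ z in S ×ˢ S, K * (z.1 ^ (-p) * z.2 ^ (-q) + z.1 ^ (-q) * z.2 ^ (-p)) :=
        setIntegral_mono_on
          (integrableOn_connectionProb hS (isCompact_Icc.prod isCompact_Icc).measure_lt_top.ne hK)
          (((hint p q).add (hint q p)).const_mul K) (measurableSet_Icc.prod measurableSet_Icc)
          fun z hz => connectionProb_le hK (hS hz).1 (hS hz).2
    _ = 2 * K * ((∫ s in S, s ^ (-p)) * ∫ t in S, t ^ (-q)) := by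
        rw [integral_const_mul, integral_add (hint p q) (hint q p), hprod, hprod]
        ring
    _ ≤ 2 * K * (a ^ (1 - p) / (p - 1) * (1 / (1 - q))) := by
        refine mul_le_mul_of_nonneg_left ?_ (by positivity)
        exact mul_le_mul (integral_Icc_rpow_neg_le_of_one_lt ha ha1 hp)
          (integral_Icc_rpow_neg_le_of_lt_one ha ha1 hq) hSq0 hp0
    _ = 2 / ((p - 1) * (1 - q)) * (a ^ (1 - p) * K) := by
        field_simp

theorem le_integral_connectionProb {a : ℝ} (ha : 0 < a) (ha4 : a ≤ 1 / 4) (hp : 0 ≤ p)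
    (hq : 0 ≤ q) (hK : 0 ≤ K) (haK : a ^ (-p) * K ≤ 1) :
    2 ^ (-p) / 2 * (a ^ (1 - p) * K)
      ≤ ∫ s in Icc a 1, ∫ t in Icc a 1, connectionProb p q K s t := by
  set R := Icc a (2 * a) ×ˢ Icc (1 / 2 : ℝ) 1
  have hRS : R ⊆ Icc a 1 ×ˢ Icc a 1 :=
    prod_mono (Icc_subset_Icc le_rfl (by linarith)) (Icc_subset_Icc (by linarith) le_rfl)
  have hS : Icc a 1 ×ˢ Icc a 1 ⊆ Ici 0 ×ˢ Ici 0 :=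
    prod_mono (fun x hx => ha.le.trans hx.1) (fun x hx => ha.le.trans hx.1)
  have hRvol : volume.real R = a / 2 := by
    rw [measureReal_def, Measure.volume_eq_prod, Measure.prod_prod, Real.volume_Icc,
      Real.volume_Icc, ENNReal.toReal_mul, ENNReal.toReal_ofReal (by linarith),
      ENNReal.toReal_ofReal (by norm_num)]
    ring
  have h2aK : (2 * a) ^ (-p) * K ≤ 1 := by
    rw [Real.mul_rpow zero_le_two ha.le, mul_assoc]
    exact mul_le_one₀ (Real.rpow_le_one_of_one_le_of_nonpos one_le_two (neg_nonpos.2 hp))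
      (by positivity) haK
  have hint := integrableOn_connectionProb (p := p) (q := q) hS
    (isCompact_Icc.prod isCompact_Icc).measure_lt_top.ne hK
  rw [integral_connectionProb_eq_setIntegral_prod ha.le hK]
  calc 2 ^ (-p) / 2 * (a ^ (1 - p) * K) = volume.real R • ((2 * a) ^ (-p) * K) := by
        rw [hRvol, smul_eq_mul, Real.mul_rpow zero_le_two ha.le, sub_eq_add_neg,
          Real.rpow_add ha, Real.rpow_one]
        ring
    _ ≤ ∫ z in R, connectionProb p q K z.1 z.2 :=
        setIntegral_ge_of_const_le (measurableSet_Icc.prod measurableSet_Icc)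
          ((measure_mono hRS).trans_lt (isCompact_Icc.prod isCompact_Icc).measure_lt_top).ne
          (fun z hz => le_connectionProb (ha.trans_le hz.1.1) hz.1.2
            (by linarith [hz.1.2, hz.2.1]) hz.2.2 hp hq hK h2aK)
          (hint.mono_set hRS)
    _ ≤ ∫ z in Icc a 1 ×ˢ Icc a 1, connectionProb p q K z.1 z.2 :=
        setIntegral_mono_set hint
          (ae_restrict_of_forall_mem (measurableSet_Icc.prod measurableSet_Icc)
            fun z hz => connectionProb_nonneg hK (hS hz).1 (hS hz).2)
          hRS.eventuallyLE

end connectionProb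

/-- The quantity `ψ⁻(μ)` for the interpolation kernel with long-range profile in
the regime `γ > 1/δ > γ'`: with mark cutoff `n^(-1-μ)`, one has
`-log I_μ(n)/log n → δ - (1+μ)(γδ - 1)` for
`I_μ(n) = ∫∫_{[n^(-1-μ),1]²} min(1, (s∧t)^(-γδ)(s∨t)^(-γ'δ) n^(-δ)) ds dt`. -/
theorem psi_minus_large_gamma (δ γ γ' μ : ℝ) (hδ : 0 < δ)
    (hγ : 1 / δ < γ) (hγ'0 : 0 ≤ γ') (hγ' : γ' < 1 / δ)
    (hμ : 0 < μ) (hsum : (1 + μ) * (γ + γ') < 1) :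
    Tendsto (fun n : ℝ =>
      -Real.log (∫ s in Set.Icc (n ^ (-1 - μ)) 1, ∫ t in Set.Icc (n ^ (-1 - μ)) 1,
          min 1 ((min s t) ^ (-(γ * δ)) * (max s t) ^ (-(γ' * δ)) * n ^ (-δ)))
        / Real.log n) atTop (nhds (δ - (1 + μ) * (γ * δ - 1))) := by
  have hp : 1 < γ * δ := (div_lt_iff₀ hδ).mp hγ
  have hq : γ' * δ < 1 := (lt_div_iff₀ hδ).mp hγ'
  have hpδ : (1 + μ) * (γ * δ) ≤ δ := by nlinarith
  have hcut : ∀ᶠ n : ℝ in atTop, 1 ≤ n ∧ n ^ (-1 - μ) ≤ 1 / 4 := by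
    refine (eventually_ge_atTop 1).and ?_
    rw [show -1 - μ = -(1 + μ) by ring]
    exact (tendsto_rpow_neg_atTop (by linarith)).eventually (eventually_le_nhds (by norm_num))
  have hpow : ∀ {n : ℝ}, 0 < n → ∀ r,
      (n ^ (-1 - μ)) ^ r * n ^ (-δ) = n ^ ((-1 - μ) * r - δ) := fun hn r => by
    rw [← Real.rpow_mul hn.le, sub_eq_add_neg _ δ, Real.rpow_add hn]
  have hψ : -(δ - (1 + μ) * (γ * δ - 1)) = (-1 - μ) * (1 - γ * δ) - δ := by ring
  refine tendsto_neg_log_div_log_of_bounds (c := 2 ^ (-(γ * δ)) / 2)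
    (C := 2 / ((γ * δ - 1) * (1 - γ' * δ))) (by positivity)
    (div_pos two_pos (mul_pos (by linarith) (by linarith))) ?_ ?_
  · filter_upwards [hcut] with n ⟨hn, ha4⟩
    have haK : (n ^ (-1 - μ)) ^ (-(γ * δ)) * n ^ (-δ) ≤ 1 := by
      rw [hpow (by linarith)]
      exact Real.rpow_le_one_of_one_le_of_nonpos hn (by linarith)
    rw [hψ, ← hpow (by linarith)]
    exact le_integral_connectionProb (by positivity) ha4 (by positivity) (by positivity)
      (by positivity) haK
  · filter_upwards [hcut] with n ⟨hn, ha4⟩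
    rw [hψ, ← hpow (by linarith)]
    exact integral_connectionProb_le (by positivity) (ha4.trans (by norm_num)) hp hq (by positivity)
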